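/- Let γ̂, λ > 0, β > 0, T > 0, and let B̃, B̃′ : [0, T] → ℝ be continuous bounded functions. Let E^{B̃}(t) = −(γ̂ β/λ) ∫ₜᵀ B̃(s) exp(∫ₜˢ F^{B̃}(r) dr) ds and similarly for E^{B̃′}. Then ‖E^{B̃} − E^{B̃′}‖_∞ ≤ (γ̂ β T/λ) ( 1 + (γ̂ T²/λ) ‖B̃′‖_∞ ( ‖B̃‖_∞ + ‖B̃′‖_∞ ) ) ‖B̃ − B̃′‖_∞. -/

import Mathlib

/-!
With `c = γ̂/λ`, `F` solves the backward Riccati equation `F' = c B̃² − F²`, `F(T) = 0`. A solution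
of a backward linear equation `φ' = q − hφ`, `φ(T) = 0`, is `φ(t) = −∫ₜᵀ q(s) exp(∫ₜˢ h) ds`.
Applied to `F` itself (`q = c B̃² ≥ 0`, `h = F`) this gives `F ≤ 0`; applied to `F − F'`
(`q = c (B̃² − B̃′²)`, `h = F + F' ≤ 0`) it gives `‖F − F'‖ ≤ c T (‖B̃‖ + ‖B̃′‖) ‖B̃ − B̃′‖`.
Since the exponents in `E` are nonpositive and `exp` is `1`-Lipschitz on `(−∞, 0]`, the
integrand of `E − E'` is at most `‖B̃ − B̃′‖ + ‖B̃′‖ T ‖F − F'‖`; integrate over `[t, T]`.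
-/

open Set

/-- The supremum norm of `f` on the interval `[0, T]`. -/
noncomputable def supNorm (T : ℝ) (f : ℝ → ℝ) : ℝ :=
  sSup ((fun t => |f t|) '' Icc 0 T)

open MeasureTheory intervalIntegral Real

lemma Real.abs_exp_sub_exp_le_of_nonpos {a b : ℝ} (ha : a ≤ 0) (hb : b ≤ 0) :
    |exp a - exp b| ≤ |a - b| := by
  wlog hba : b ≤ a generalizing a b
  · rw [abs_sub_comm, abs_sub_comm a b]
    exact this hb ha (le_of_not_ge hba)
  have hea : exp a ≤ 1 := exp_le_one_iff.2 ha
  have heb : exp b = exp a * exp (b - a) := by rw [← exp_add]; ring_nf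
  have := add_one_le_exp (b - a)
  rw [abs_of_nonneg (sub_nonneg.2 (exp_le_exp.2 hba)), abs_of_nonneg (sub_nonneg.2 hba), heb]
  nlinarith [exp_pos a]

lemma abs_mul_exp_sub_mul_exp_le {x y a b : ℝ} (ha : a ≤ 0) (hb : b ≤ 0) :
    |x * exp a - y * exp b| ≤ |x - y| + |y| * |a - b| :=
  calc |x * exp a - y * exp b| = |(x - y) * exp a + y * (exp a - exp b)| := by ring_nf
    _ ≤ |x - y| * exp a + |y| * |exp a - exp b| := by
      rw [← abs_of_pos (exp_pos a), ← abs_mul, ← abs_mul, abs_of_pos (exp_pos a)]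
      exact abs_add_le _ _
    _ ≤ |x - y| * 1 + |y| * |a - b| :=
      add_le_add (mul_le_mul_of_nonneg_left (exp_le_one_iff.2 ha) (abs_nonneg _))
        (mul_le_mul_of_nonneg_left (abs_exp_sub_exp_le_of_nonpos ha hb) (abs_nonneg _))
    _ = |x - y| + |y| * |a - b| := by ring

lemma le_supNorm {T t : ℝ} {f : ℝ → ℝ} (hf : ContinuousOn f (Icc 0 T)) (ht : t ∈ Icc 0 T) :
    |f t| ≤ supNorm T f :=
  le_csSup (isCompact_Icc.bddAbove_image (continuous_abs.comp_continuousOn hf)) ⟨t, ht, rfl⟩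

lemma supNorm_nonneg (T : ℝ) (f : ℝ → ℝ) : 0 ≤ supNorm T f :=
  Real.sSup_nonneg (by rintro _ ⟨t, -, rfl⟩; exact abs_nonneg _)

lemma supNorm_le {T M : ℝ} {f : ℝ → ℝ} (hT : 0 ≤ T) (h : ∀ t ∈ Icc 0 T, |f t| ≤ M) :
    supNorm T f ≤ M :=
  csSup_le ((nonempty_Icc.2 hT).image _) (by rintro x ⟨t, ht, rfl⟩; exact h t ht)

section Interval

variable {a b : ℝ}

lemma integral_nonpos_of_nonpos_on {h : ℝ → ℝ} (hab : a ≤ b) (hh : ∀ r ∈ Icc a b, h r ≤ 0) :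
    ∫ r in a..b, h r ≤ 0 := by
  have := integral_nonneg (μ := volume) hab fun r hr => neg_nonneg.2 (hh r hr)
  rwa [intervalIntegral.integral_neg, neg_nonneg] at this

lemma continuousOn_exp_integral {h : ℝ → ℝ} (hab : a ≤ b) (hh : ContinuousOn h (Icc a b)) :
    ContinuousOn (fun s => exp (∫ r in a..s, h r)) (Icc a b) := by
  rw [← uIcc_of_le hab] at hh ⊢
  exact (continuousOn_primitive_interval (hh.integrableOn_compact isCompact_uIcc)).rexp

lemma hasDerivAt_integral_of_continuousOn {g : ℝ → ℝ} {c t : ℝ} (hg : ContinuousOn g (Icc a b))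
    (hc : c ∈ Icc a b) (ht : t ∈ Ioo a b) :
    HasDerivAt (fun u => ∫ s in c..u, g s) (g t) t :=
  integral_hasDerivAt_right
    ((hg.mono (uIcc_subset_Icc hc (Ioo_subset_Icc_self ht))).intervalIntegrable)
    ((hg.mono Ioo_subset_Icc_self).stronglyMeasurableAtFilter isOpen_Ioo t ht)
    (hg.continuousAt (Icc_mem_nhds ht.1 ht.2))

theorem eq_neg_integral_mul_exp_integral {φ q h : ℝ → ℝ} (hφ : ContinuousOn φ (Icc a b))
    (hq : ContinuousOn q (Icc a b)) (hh : ContinuousOn h (Icc a b))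
    (hderiv : ∀ t ∈ Ioo a b, HasDerivAt φ (q t - h t * φ t) t) (hφb : φ b = 0)
    {t : ℝ} (ht : t ∈ Icc a b) :
    φ t = -∫ s in t..b, q s * exp (∫ r in t..s, h r) := by
  have hsub : Icc t b ⊆ Icc a b := Icc_subset_Icc_left ht.1
  have hW := continuousOn_exp_integral ht.2 (hh.mono hsub)
  have hψ : ∀ s ∈ Ioo t b, HasDerivAt (fun u => φ u * exp (∫ r in t..u, h r))
      (q s * exp (∫ r in t..s, h r)) s := fun s hs => by
    have hs' : s ∈ Ioo a b := ⟨ht.1.trans_lt hs.1, hs.2⟩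
    exact ((hderiv s hs').mul (hasDerivAt_integral_of_continuousOn hh ht hs').exp).congr_deriv
      (by ring)
  have hFTC := integral_eq_sub_of_hasDerivAt_of_le ht.2 ((hφ.mono hsub).mul hW) hψ
    (((hq.mono hsub).mul hW).intervalIntegrable_of_Icc ht.2)
  simp only [Pi.mul_apply, hφb, integral_same, exp_zero, zero_mul] at hFTC
  rw [hFTC, zero_sub, neg_neg, mul_one]

end Interval

/-- Integral form of the backward Riccati equation `F' = c B² − F²`, `F b = 0`. -/
def IsRiccatiSolution (a b c : ℝ) (B F : ℝ → ℝ) : Prop :=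
  ContinuousOn F (Icc a b) ∧ ∀ t ∈ Icc a b, F t = -∫ s in t..b, (c * B s ^ 2 - F s ^ 2)

namespace IsRiccatiSolution

variable {a b c : ℝ} {B B' F F' : ℝ → ℝ}

lemma right_eq_zero (hF : IsRiccatiSolution a b c B F) (hab : a ≤ b) : F b = 0 := by
  rw [hF.2 b (right_mem_Icc.2 hab), integral_same, neg_zero]

lemma hasDerivAt (hF : IsRiccatiSolution a b c B F) (hB : ContinuousOn B (Icc a b)) {t : ℝ}
    (ht : t ∈ Ioo a b) : HasDerivAt F (c * B t ^ 2 - F t * F t) t := by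
  have hg : ContinuousOn (fun s => c * B s ^ 2 - F s ^ 2) (Icc a b) :=
    (continuousOn_const.mul (hB.pow 2)).sub (hF.1.pow 2)
  have hb : b ∈ Icc a b := right_mem_Icc.2 (ht.1.trans ht.2).le
  have heq : (fun u => ∫ s in b..u, (c * B s ^ 2 - F s ^ 2)) =ᶠ[nhds t] F := by
    filter_upwards [Ioo_mem_nhds ht.1 ht.2] with u hu
    rw [hF.2 u (Ioo_subset_Icc_self hu), integral_symm]
  exact ((hasDerivAt_integral_of_continuousOn hg hb ht).congr_of_eventuallyEq
    heq.symm).congr_deriv (by ring)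

lemma nonpos (hF : IsRiccatiSolution a b c B F) (hB : ContinuousOn B (Icc a b)) (hc : 0 ≤ c)
    {t : ℝ} (ht : t ∈ Icc a b) : F t ≤ 0 := by
  rw [eq_neg_integral_mul_exp_integral (q := fun s => c * B s ^ 2) hF.1
    (continuousOn_const.mul (hB.pow 2)) hF.1
    (fun s hs => hF.hasDerivAt hB hs) (hF.right_eq_zero (ht.1.trans ht.2)) ht, neg_nonpos]
  exact integral_nonneg ht.2 fun s _ => by positivity

lemma abs_sub_le (hF : IsRiccatiSolution a b c B F) (hF' : IsRiccatiSolution a b c B' F')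
    (hB : ContinuousOn B (Icc a b)) (hB' : ContinuousOn B' (Icc a b)) (hc : 0 ≤ c) {M M' d : ℝ}
    (hM : ∀ s ∈ Icc a b, |B s| ≤ M) (hM' : ∀ s ∈ Icc a b, |B' s| ≤ M')
    (hd : ∀ s ∈ Icc a b, |B s - B' s| ≤ d) {t : ℝ} (ht : t ∈ Icc a b) :
    |F t - F' t| ≤ c * (M + M') * d * (b - t) := by
  have hab : a ≤ b := ht.1.trans ht.2
  -- `F - F'` solves the linear equation `φ' = c (B² − B'²) − (F + F') φ`.
  have hdiff := eq_neg_integral_mul_exp_integral (φ := fun s => F s - F' s)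
    (q := fun s => c * (B s ^ 2 - B' s ^ 2)) (h := fun s => F s + F' s) (hF.1.sub hF'.1)
    (continuousOn_const.mul ((hB.pow 2).sub (hB'.pow 2))) (hF.1.add hF'.1)
    (fun s hs => ((hF.hasDerivAt hB hs).sub (hF'.hasDerivAt hB' hs)).congr_deriv (by ring))
    (by simp [hF.right_eq_zero hab, hF'.right_eq_zero hab]) ht
  rw [hdiff, abs_neg, ← Real.norm_eq_abs]
  refine (intervalIntegral.norm_integral_le_of_norm_le_const fun s hs => ?_).trans_eq
    (by rw [abs_of_nonneg (sub_nonneg.2 ht.2)])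
  rw [uIoc_of_le ht.2] at hs
  have hs' : s ∈ Icc a b := ⟨ht.1.trans hs.1.le, hs.2⟩
  have hexp : exp (∫ r in t..s, (F r + F' r)) ≤ 1 :=
    exp_le_one_iff.2 (integral_nonpos_of_nonpos_on hs.1.le fun r hr =>
      have hr' : r ∈ Icc a b := ⟨ht.1.trans hr.1, hr.2.trans hs.2⟩
      add_nonpos (hF.nonpos hB hc hr') (hF'.nonpos hB' hc hr'))
  have hsum : |B s + B' s| ≤ M + M' := (abs_add_le _ _).trans (add_le_add (hM s hs') (hM' s hs'))
  have hsq : |B s ^ 2 - B' s ^ 2| ≤ (M + M') * d := by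
    rw [show B s ^ 2 - B' s ^ 2 = (B s + B' s) * (B s - B' s) by ring, abs_mul]
    exact mul_le_mul hsum (hd s hs') (abs_nonneg _) ((abs_nonneg _).trans hsum)
  rw [Real.norm_eq_abs, abs_mul, abs_mul, abs_of_nonneg hc, abs_of_pos (exp_pos _), mul_assoc c]
  calc c * (|B s ^ 2 - B' s ^ 2| * exp (∫ r in t..s, (F r + F' r)))
      ≤ c * ((M + M') * d * 1) := by gcongr; exact (abs_nonneg _).trans hsq
    _ = c * (M + M') * d := by ring

end IsRiccatiSolution

lemma abs_integral_mul_exp_sub_le {t b K M' d : ℝ} {B B' F F' : ℝ → ℝ} (htb : t ≤ b)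
    (hB : ContinuousOn B (Icc t b)) (hB' : ContinuousOn B' (Icc t b))
    (hF : ContinuousOn F (Icc t b)) (hF' : ContinuousOn F' (Icc t b))
    (hF0 : ∀ r ∈ Icc t b, F r ≤ 0) (hF'0 : ∀ r ∈ Icc t b, F' r ≤ 0)
    (hK : ∀ r ∈ Icc t b, |F r - F' r| ≤ K) (hM' : ∀ s ∈ Icc t b, |B' s| ≤ M')
    (hd : ∀ s ∈ Icc t b, |B s - B' s| ≤ d) :
    |(∫ s in t..b, B s * exp (∫ r in t..s, F r)) - ∫ s in t..b, B' s * exp (∫ r in t..s, F' r)|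
      ≤ (d + M' * (K * (b - t))) * (b - t) := by
  have hI : IntervalIntegrable (fun s => B s * exp (∫ r in t..s, F r)) volume t b :=
    (hB.mul (continuousOn_exp_integral htb hF)).intervalIntegrable_of_Icc htb
  have hI' : IntervalIntegrable (fun s => B' s * exp (∫ r in t..s, F' r)) volume t b :=
    (hB'.mul (continuousOn_exp_integral htb hF')).intervalIntegrable_of_Icc htb
  rw [← integral_sub hI hI', ← Real.norm_eq_abs]
  refine (intervalIntegral.norm_integral_le_of_norm_le_const fun s hs => ?_).trans_eq
    (by rw [abs_of_nonneg (sub_nonneg.2 htb)])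
  rw [uIoc_of_le htb] at hs
  have hs' : s ∈ Icc t b := Ioc_subset_Icc_self hs
  have hsub : Icc t s ⊆ Icc t b := Icc_subset_Icc_right hs.2
  have hexponent : |(∫ r in t..s, F r) - ∫ r in t..s, F' r| ≤ K * (b - t) := by
    rw [← integral_sub ((hF.mono hsub).intervalIntegrable_of_Icc hs.1.le)
      ((hF'.mono hsub).intervalIntegrable_of_Icc hs.1.le), ← Real.norm_eq_abs]
    refine (intervalIntegral.norm_integral_le_of_norm_le_const (C := K) fun r hr => ?_).trans ?_
    · rw [uIoc_of_le hs.1.le] at hr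
      exact hK r (hsub (Ioc_subset_Icc_self hr))
    · rw [abs_of_nonneg (sub_nonneg.2 hs.1.le)]
      exact mul_le_mul_of_nonneg_left (by linarith [hs.2])
        ((abs_nonneg _).trans (hK t ⟨le_rfl, htb⟩))
  have hexp := integral_nonpos_of_nonpos_on hs.1.le fun r hr => hF0 r (hsub hr)
  have hexp' := integral_nonpos_of_nonpos_on hs.1.le fun r hr => hF'0 r (hsub hr)
  refine (abs_mul_exp_sub_mul_exp_le hexp hexp').trans ?_
  exact add_le_add (hd s hs') (mul_le_mul (hM' s hs') hexponent (abs_nonneg _)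
    ((abs_nonneg _).trans (hM' s hs')))

/-- Stability of `E^{B̃}(t) = −(γ̂β/λ)∫ₜᵀ B̃(s) exp(∫ₜˢ F^{B̃}(r) dr) ds` with respect to `B̃`:
`‖E^{B̃} − E^{B̃′}‖_∞ ≤ (γ̂βT/λ)(1 + (γ̂T²/λ)‖B̃′‖_∞(‖B̃‖_∞ + ‖B̃′‖_∞))‖B̃ − B̃′‖_∞`. -/
theorem E_stability
    (γhat lam β T : ℝ) (hγ : 0 < γhat) (hlam : 0 < lam) (hβ : 0 < β) (hT : 0 < T)
    (Btil Btil' : ℝ → ℝ)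
    (hB : ContinuousOn Btil (Icc 0 T)) (hB' : ContinuousOn Btil' (Icc 0 T))
    (F F' : ℝ → ℝ)
    (hFcont : ContinuousOn F (Icc 0 T)) (hF'cont : ContinuousOn F' (Icc 0 T))
    (hFsol : ∀ t ∈ Icc (0:ℝ) T, F t = -∫ s in t..T, (γhat / lam * Btil s ^ 2 - F s ^ 2))
    (hF'sol : ∀ t ∈ Icc (0:ℝ) T, F' t = -∫ s in t..T, (γhat / lam * Btil' s ^ 2 - F' s ^ 2))
    (E E' : ℝ → ℝ)
    (hE : E = fun t => -(γhat * β / lam) * ∫ s in t..T, Btil s * Real.exp (∫ r in t..s, F r))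
    (hE' : E' = fun t => -(γhat * β / lam) *
      ∫ s in t..T, Btil' s * Real.exp (∫ r in t..s, F' r)) :
    supNorm T (fun t => E t - E' t) ≤
      γhat * β * T / lam *
        (1 + γhat * T ^ 2 / lam * supNorm T Btil' * (supNorm T Btil + supNorm T Btil')) *
        supNorm T (fun u => Btil u - Btil' u) := by
  subst hE hE'
  set c := γhat / lam
  have hc : 0 ≤ c := by positivity
  set M := supNorm T Btil
  set M' := supNorm T Btil'
  set d := supNorm T (fun u => Btil u - Btil' u)
  have hMnn : 0 ≤ M := supNorm_nonneg _ _
  have hM'nn : 0 ≤ M' := supNorm_nonneg _ _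
  have hdnn : 0 ≤ d := supNorm_nonneg _ _
  have hM (s) (hs : s ∈ Icc 0 T) : |Btil s| ≤ M := le_supNorm hB hs
  have hM' (s) (hs : s ∈ Icc 0 T) : |Btil' s| ≤ M' := le_supNorm hB' hs
  have hd (s) (hs : s ∈ Icc 0 T) : |Btil s - Btil' s| ≤ d := le_supNorm (hB.sub hB') hs
  have hRic : IsRiccatiSolution 0 T c Btil F := ⟨hFcont, hFsol⟩
  have hRic' : IsRiccatiSolution 0 T c Btil' F' := ⟨hF'cont, hF'sol⟩
  have hK (r) (hr : r ∈ Icc 0 T) : |F r - F' r| ≤ c * (M + M') * d * T :=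
    (hRic.abs_sub_le hRic' hB hB' hc hM hM' hd hr).trans (by gcongr; linarith [hr.1])
  refine supNorm_le hT.le fun t ht => ?_
  have hsub : Icc t T ⊆ Icc 0 T := Icc_subset_Icc_left ht.1
  have hint := abs_integral_mul_exp_sub_le ht.2 (hB.mono hsub) (hB'.mono hsub)
    (hFcont.mono hsub) (hF'cont.mono hsub) (fun r hr => hRic.nonpos hB hc (hsub hr))
    (fun r hr => hRic'.nonpos hB' hc (hsub hr)) (fun r hr => hK r (hsub hr))
    (fun s hs => hM' s (hsub hs)) (fun s hs => hd s (hsub hs))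
  calc _ = c * β * |(∫ s in t..T, Btil s * exp (∫ r in t..s, F r)) -
        ∫ s in t..T, Btil' s * exp (∫ r in t..s, F' r)| := by
        rw [← mul_sub, abs_mul, abs_neg, abs_of_pos (by positivity), mul_div_right_comm]
    _ ≤ c * β * ((d + M' * (c * (M + M') * d * T * (T - t))) * (T - t)) := by gcongr
    _ ≤ c * β * ((d + M' * (c * (M + M') * d * T * T)) * T) := by
        have : T - t ≤ T := by linarith [ht.1]
        gcongr
        linarith [ht.2]
    _ = _ := by ring
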